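/- Let a, b, c, E, I, S, C be real numbers and φ(v) = (a·f(v) + b·g(v) + c)². Then E·∫_B φ(v) e(v) dv + I·∫_B φ(v) i(v) dv + S·∫_B φ(v) s(v) dv = C holds if and only if 10(3E + S)·a² + 10(3S + E)·b² + 20·I·a·b + 63(E + S)·c² = (945/(4π))·C. -/

import Mathlib

open MeasureTheory Real Set

/-!
In cylindrical coordinates `v = (x, r cos θ, r sin θ)` around the `v₂`-axis, the integrand
`φ · (E e + I i + S s)` becomes `r³` times a polynomial in `x`, `r`, `cos θ`, `sin θ`.
Averaging over `θ ↦ -θ` and `θ ↦ θ + π` kills every monomial that is odd in `cos θ` or in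
`sin θ`, and the remaining angular integrals are classical; this leaves
`(π/4) (K (1+x)² r⁵ + 4 (E+S) c² r³)` with `K = (3E+S)a² + (E+3S)b² + 2Iab`. Integrating over
`0 < r < √(1-x²)` and `-1 < x < 1` gives
`(4π/945) (10(3E+S)a² + 10(3S+E)b² + 20Iab + 63(E+S)c²)`.
-/

variable {M : Type*} [NormedAddCommGroup M] [NormedSpace ℝ M]

theorem integral_euclideanSpace_fin_three (F : ℝ × ℝ × ℝ → M) :
    ∫ v : EuclideanSpace ℝ (Fin 3), F (v 0, v 1, v 2) = ∫ p : ℝ × ℝ × ℝ, F p := by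
  let e : EuclideanSpace ℝ (Fin 3) ≃ᵐ ℝ × ℝ × ℝ :=
    ((MeasurableEquiv.toLp 2 (Fin 3 → ℝ)).symm.trans
      (MeasurableEquiv.piFinSuccAbove (fun _ => ℝ) 0)).trans
      (MeasurableEquiv.prodCongr (MeasurableEquiv.refl ℝ) MeasurableEquiv.finTwoArrow)
  have he : MeasurePreserving e :=
    ((EuclideanSpace.volume_preserving_symm_measurableEquiv_toLp _).trans
      (volume_preserving_piFinSuccAbove _ 0)).trans
      ((MeasurePreserving.id volume).prod (volume_preserving_finTwoArrow ℝ))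
  exact he.integral_comp' F

theorem EuclideanSpace.mem_ball_zero_one_fin_three_iff (v : EuclideanSpace ℝ (Fin 3)) :
    v ∈ Metric.ball 0 1 ↔ v 0 ^ 2 + v 1 ^ 2 + v 2 ^ 2 < 1 := by
  rw [mem_ball_zero_iff, ← sq_lt_one_iff₀ (norm_nonneg v), EuclideanSpace.norm_sq_eq,
    Fin.sum_univ_three]
  simp only [Real.norm_eq_abs, sq_abs]

theorem setIntegral_Ioo_eq_intervalIntegral {f : ℝ → M} {a b : ℝ} (hab : a ≤ b) :
    ∫ x in Ioo a b, f x = ∫ x in a..b, f x := by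
  rw [intervalIntegral.integral_of_le hab, integral_Ioc_eq_integral_Ioo]

theorem setIntegral_disc_eq_polar (F : ℝ × ℝ → ℝ) (hF : Continuous F) (s : ℝ) :
    ∫ q in {q : ℝ × ℝ | q.1 ^ 2 + q.2 ^ 2 < s}, F q
      = ∫ r in 0..√s, ∫ θ in -π..π, r * F (r * cos θ, r * sin θ) := by
  have hpreimage : polarCoord.symm ⁻¹' {q : ℝ × ℝ | q.1 ^ 2 + q.2 ^ 2 < s}
      = {p : ℝ × ℝ | p.1 ^ 2 < s} := by
    ext p
    have hsq : (p.1 * cos p.2) ^ 2 + (p.1 * sin p.2) ^ 2 = p.1 ^ 2 := by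
      linear_combination p.1 ^ 2 * cos_sq_add_sin_sq p.2
    simp only [mem_preimage, mem_ofPred_eq, polarCoord_symm_apply, hsq]
  have htarget : polarCoord.target ∩ {p : ℝ × ℝ | p.1 ^ 2 < s} = Ioo 0 √s ×ˢ Ioo (-π) π := by
    ext ⟨r, θ⟩
    simp only [polarCoord_target, mem_inter_iff, mem_prod, mem_Ioi, mem_Ioo, mem_ofPred_eq]
    constructor
    · rintro ⟨⟨hr, hθ⟩, hrs⟩
      exact ⟨⟨hr, (lt_sqrt hr.le).2 hrs⟩, hθ⟩
    · rintro ⟨⟨hr, hrs⟩, hθ⟩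
      exact ⟨⟨hr, hθ⟩, (lt_sqrt hr.le).1 hrs⟩
  have hint : IntegrableOn (fun p : ℝ × ℝ => p.1 * F (polarCoord.symm p))
      (Ioo 0 √s ×ˢ Ioo (-π) π) :=
    (ContinuousOn.integrableOn_compact (isCompact_Icc.prod isCompact_Icc) (by fun_prop)).mono_set
      (prod_mono Ioo_subset_Icc_self Ioo_subset_Icc_self)
  rw [← integral_indicator (measurableSet_lt (by fun_prop) measurable_const),
    ← integral_comp_polarCoord_symm]
  simp_rw [← indicator_comp_right, hpreimage, ← indicator_smul_apply, smul_eq_mul,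
    Function.comp_apply]
  rw [setIntegral_indicator (measurableSet_lt (by fun_prop) measurable_const), htarget,
    Measure.volume_eq_prod, setIntegral_prod _ hint,
    setIntegral_Ioo_eq_intervalIntegral (sqrt_nonneg s)]
  refine intervalIntegral.integral_congr fun r _ => ?_
  exact setIntegral_Ioo_eq_intervalIntegral (by linarith [pi_pos])

theorem indicator_unitBall_prod_mk {N : Type*} [Zero N] (G : ℝ × ℝ × ℝ → N) (x : ℝ) (q : ℝ × ℝ) :
    {p : ℝ × ℝ × ℝ | p.1 ^ 2 + p.2.1 ^ 2 + p.2.2 ^ 2 < 1}.indicator G (x, q)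
      = {q : ℝ × ℝ | q.1 ^ 2 + q.2 ^ 2 < 1 - x ^ 2}.indicator (fun q => G (x, q)) q := by
  simp only [indicator_apply, mem_ofPred_eq, lt_sub_iff_add_lt', add_assoc]

theorem setIntegral_unitBall_eq_cylindrical (G : ℝ × ℝ × ℝ → ℝ) (hG : Continuous G) :
    ∫ v in Metric.ball (0 : EuclideanSpace ℝ (Fin 3)) 1, G (v 0, v 1, v 2)
      = ∫ x in -1..1, ∫ r in 0..√(1 - x ^ 2), ∫ θ in -π..π, r * G (x, r * cos θ, r * sin θ) := by
  have hBG : Integrable ({p : ℝ × ℝ × ℝ | p.1 ^ 2 + p.2.1 ^ 2 + p.2.2 ^ 2 < 1}.indicator G) := by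
    refine (integrable_indicator_iff (measurableSet_lt (by fun_prop) measurable_const)).2 <|
      (hG.integrableOn_Icc (a := -1) (b := 1)).mono_set ?_
    rintro ⟨x, y, z⟩ (h : x ^ 2 + y ^ 2 + z ^ 2 < 1)
    simp only [mem_Icc, Prod.le_def, Prod.fst_neg, Prod.snd_neg, Prod.fst_one, Prod.snd_one]
    refine ⟨⟨?_, ?_, ?_⟩, ?_, ?_, ?_⟩ <;> nlinarith [sq_nonneg x, sq_nonneg y, sq_nonneg z]
  have hslice (x : ℝ) :=
    setIntegral_disc_eq_polar (fun q => G (x, q)) (by fun_prop) (1 - x ^ 2)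
  calc ∫ v in Metric.ball (0 : EuclideanSpace ℝ (Fin 3)) 1, G (v 0, v 1, v 2)
      = ∫ p, {p : ℝ × ℝ × ℝ | p.1 ^ 2 + p.2.1 ^ 2 + p.2.2 ^ 2 < 1}.indicator G p := by
        classical
        rw [← integral_indicator Metric.isOpen_ball.measurableSet,
          ← integral_euclideanSpace_fin_three]
        congr 1 with v
        simp only [indicator_apply, EuclideanSpace.mem_ball_zero_one_fin_three_iff,
          mem_ofPred_eq]
    _ = ∫ x, ∫ q in {q : ℝ × ℝ | q.1 ^ 2 + q.2 ^ 2 < 1 - x ^ 2}, G (x, q) := by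
        rw [Measure.volume_eq_prod, integral_prod _ hBG]
        congr 1 with x
        rw [← integral_indicator (measurableSet_lt (by fun_prop) measurable_const)]
        congr 1 with q
        exact indicator_unitBall_prod_mk G x q
    _ = ∫ x in -1..1, ∫ r in 0..√(1 - x ^ 2), ∫ θ in -π..π, r * G (x, r * cos θ, r * sin θ) := by
        simp_rw [hslice]
        rw [← setIntegral_Ioo_eq_intervalIntegral (by norm_num),
          setIntegral_eq_integral_of_forall_compl_eq_zero]
        intro x hx
        rw [sqrt_eq_zero'.2, intervalIntegral.integral_same]
        rw [mem_Ioo, not_and_or, not_lt, not_lt] at hx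
        rcases hx with hx | hx <;> nlinarith

theorem integral_neg_pi_pi_comp_neg (f : ℝ → M) :
    ∫ θ in -π..π, f (-θ) = ∫ θ in -π..π, f θ := by
  rw [intervalIntegral.integral_comp_neg, neg_neg]

theorem integral_neg_pi_pi_comp_add_pi {f : ℝ → M} (hf : Function.Periodic f (2 * π)) :
    ∫ θ in -π..π, f (θ + π) = ∫ θ in -π..π, f θ := by
  rw [intervalIntegral.integral_comp_add_right]
  convert hf.intervalIntegral_add_eq 0 (-π) using 2 <;> ring

theorem integral_neg_pi_pi_eq_integral_symmetrization {f : ℝ → ℝ} (hf : Continuous f)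
    (hper : Function.Periodic f (2 * π)) :
    ∫ θ in -π..π, f θ = ∫ θ in -π..π, (f θ + f (-θ) + (f (θ + π) + f (-(θ + π)))) / 4 := by
  let h : ℝ → ℝ := fun θ => f θ + f (-θ)
  have hh : Continuous h := by fun_prop
  have hhper : Function.Periodic h (2 * π) := fun θ => by
    simp only [h, hper θ, neg_add, ← sub_eq_add_neg, hper.sub_eq]
  have h2 : ∫ θ in -π..π, h θ = 2 * ∫ θ in -π..π, f θ := by
    rw [intervalIntegral.integral_add (f := f) (g := fun θ => f (-θ)) (hf.intervalIntegrable _ _)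
      ((hf.comp continuous_neg).intervalIntegrable _ _), integral_neg_pi_pi_comp_neg]
    ring
  change _ = ∫ θ in -π..π, (h θ + h (θ + π)) / 4
  rw [intervalIntegral.integral_div,
    intervalIntegral.integral_add (f := h) (g := fun θ => h (θ + π)) (hh.intervalIntegrable _ _)
      ((hh.comp (continuous_add_const π)).intervalIntegrable _ _),
    integral_neg_pi_pi_comp_add_pi hhper, h2]
  ring

theorem integral_sq_mul_quadratic_form_angle (u w d E I S : ℝ) :
    ∫ θ in -π..π, (u * cos θ + w * sin θ + d) ^ 2 *
        (E * cos θ ^ 2 + I * (cos θ * sin θ) + S * sin θ ^ 2)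
      = π / 4 * ((3 * E + S) * u ^ 2 + (E + 3 * S) * w ^ 2 + 2 * I * u * w
          + 4 * (E + S) * d ^ 2) := by
  set g : ℝ → ℝ := fun θ => (u * cos θ + w * sin θ + d) ^ 2 *
    (E * cos θ ^ 2 + I * (cos θ * sin θ) + S * sin θ ^ 2)
  have hsym (θ : ℝ) : (g θ + g (-θ) + (g (θ + π) + g (-(θ + π)))) / 4
      = u ^ 2 * E * cos θ ^ 4 + (u ^ 2 * S + w ^ 2 * E + 2 * u * w * I) * (sin θ ^ 2 * cos θ ^ 2)
        + w ^ 2 * S * sin θ ^ 4 + d ^ 2 * E * cos θ ^ 2 + d ^ 2 * S * sin θ ^ 2 := by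
    simp only [g, cos_neg, sin_neg, cos_add_pi, sin_add_pi]
    ring
  have hsin : sin (4 * π) = 0 := by exact_mod_cast sin_nat_mul_pi 4
  rw [integral_neg_pi_pi_eq_integral_symmetrization (f := g) (by fun_prop)
    fun θ => by simp only [g, cos_add_two_pi, sin_add_two_pi]]
  simp_rw [hsym]
  simp (disch := exact Continuous.intervalIntegrable (by fun_prop) _ _) only
    [intervalIntegral.integral_add, intervalIntegral.integral_const_mul]
  rw [integral_cos_pow 2, integral_sin_pow 2, integral_sin_sq_mul_cos_sq, integral_cos_sq,
    integral_sin_sq]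
  simp only [hsin, sin_pi, sin_neg, cos_neg, cos_pi, mul_neg]
  ring

theorem integral_mul_pow_five_add_mul_pow_three (A B R : ℝ) :
    ∫ r in 0..R, (A * r ^ 5 + B * r ^ 3) = A * R ^ 6 / 6 + B * R ^ 4 / 4 := by
  simp (disch := exact Continuous.intervalIntegrable (by fun_prop) _ _) only
    [intervalIntegral.integral_add, intervalIntegral.integral_const_mul, integral_pow]
  ring

theorem integral_one_add_sq_mul_one_sub_sq_pow_three :
    ∫ x in -1..1, (1 + x) ^ 2 * (1 - x ^ 2) ^ 3 = (64 / 63 : ℝ) := by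
  -- `x ^ 1`, since `fun x => 2 * x` would eta-reduce and escape `integral_const_mul`
  have hexpand : (fun x : ℝ => (1 + x) ^ 2 * (1 - x ^ 2) ^ 3) = fun x =>
      1 + 2 * x ^ 1 - 2 * x ^ 2 - 6 * x ^ 3 + 6 * x ^ 5 + 2 * x ^ 6 - 2 * x ^ 7 - x ^ 8 := by
    ext x
    ring
  rw [hexpand]
  simp (disch := exact Continuous.intervalIntegrable (by fun_prop) _ _) only
    [intervalIntegral.integral_add, intervalIntegral.integral_sub,
      intervalIntegral.integral_const_mul, integral_pow, integral_one]
  norm_num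

theorem integral_one_sub_sq_sq : ∫ x in -1..1, (1 - x ^ 2) ^ 2 = (16 / 15 : ℝ) := by
  have hexpand : (fun x : ℝ => (1 - x ^ 2) ^ 2) = fun x => 1 - 2 * x ^ 2 + x ^ 4 := by
    ext x
    ring
  rw [hexpand]
  simp (disch := exact Continuous.intervalIntegrable (by fun_prop) _ _) only
    [intervalIntegral.integral_add, intervalIntegral.integral_sub,
      intervalIntegral.integral_const_mul, integral_pow, integral_one]
  norm_num

theorem integral_unitBall_sq_mul_quadratic_form (a b c E I S : ℝ) :
    ∫ v in Metric.ball (0 : EuclideanSpace ℝ (Fin 3)) 1,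
        (a * ((1 + v 0) * v 1) + b * ((1 + v 0) * v 2) + c) ^ 2 *
          (E * v 1 ^ 2 + I * (v 1 * v 2) + S * v 2 ^ 2)
      = 4 * π / 945 * (10 * (3 * E + S) * a ^ 2 + 10 * (3 * S + E) * b ^ 2
          + 20 * I * a * b + 63 * (E + S) * c ^ 2) := by
  set K := (3 * E + S) * a ^ 2 + (E + 3 * S) * b ^ 2 + 2 * I * a * b
  have hangle (x r : ℝ) :
      ∫ θ in -π..π, r * ((a * ((1 + x) * (r * cos θ)) + b * ((1 + x) * (r * sin θ)) + c) ^ 2 *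
        (E * (r * cos θ) ^ 2 + I * (r * cos θ * (r * sin θ)) + S * (r * sin θ) ^ 2))
        = π / 4 * K * (1 + x) ^ 2 * r ^ 5 + π * (E + S) * c ^ 2 * r ^ 3 := by
    have hfactor (θ : ℝ) :
        r * ((a * ((1 + x) * (r * cos θ)) + b * ((1 + x) * (r * sin θ)) + c) ^ 2 *
          (E * (r * cos θ) ^ 2 + I * (r * cos θ * (r * sin θ)) + S * (r * sin θ) ^ 2))
        = r ^ 3 * ((a * (1 + x) * r * cos θ + b * (1 + x) * r * sin θ + c) ^ 2 *
          (E * cos θ ^ 2 + I * (cos θ * sin θ) + S * sin θ ^ 2)) := by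
      ring
    simp_rw [hfactor, intervalIntegral.integral_const_mul, integral_sq_mul_quadratic_form_angle]
    ring
  have hradial (x : ℝ) (hx : x ∈ uIcc (-1) 1) :
      ∫ r in 0..√(1 - x ^ 2), (π / 4 * K * (1 + x) ^ 2 * r ^ 5 + π * (E + S) * c ^ 2 * r ^ 3)
        = π / 24 * K * ((1 + x) ^ 2 * (1 - x ^ 2) ^ 3)
          + π / 4 * (E + S) * c ^ 2 * (1 - x ^ 2) ^ 2 := by
    rw [uIcc_of_le (by norm_num), mem_Icc] at hx
    have hsqrt : √(1 - x ^ 2) ^ 2 = 1 - x ^ 2 := sq_sqrt (by nlinarith)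
    rw [integral_mul_pow_five_add_mul_pow_three,
      show √(1 - x ^ 2) ^ 6 = (√(1 - x ^ 2) ^ 2) ^ 3 by ring,
      show √(1 - x ^ 2) ^ 4 = (√(1 - x ^ 2) ^ 2) ^ 2 by ring, hsqrt]
    ring
  refine (setIntegral_unitBall_eq_cylindrical
    (fun p => (a * ((1 + p.1) * p.2.1) + b * ((1 + p.1) * p.2.2) + c) ^ 2 *
      (E * p.2.1 ^ 2 + I * (p.2.1 * p.2.2) + S * p.2.2 ^ 2)) (by fun_prop)).trans ?_
  simp_rw [hangle]
  rw [intervalIntegral.integral_congr hradial]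
  simp (disch := exact Continuous.intervalIntegrable (by fun_prop) _ _) only
    [intervalIntegral.integral_add, intervalIntegral.integral_const_mul,
      integral_one_add_sq_mul_one_sub_sq_pow_three, integral_one_sub_sq_sq]
  ring

/-- `v 0, v 1, v 2` are the coordinates `v₂, v₃, v₄` of the paper. -/
theorem integral_equation_reduction (a b c E I S C : ℝ) :
    (E * (∫ v in Metric.ball (0 : EuclideanSpace ℝ (Fin 3)) 1,
        (a * ((1 + v 0) * v 1) + b * ((1 + v 0) * v 2) + c) ^ 2 * (v 1) ^ 2) +
     I * (∫ v in Metric.ball (0 : EuclideanSpace ℝ (Fin 3)) 1,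
        (a * ((1 + v 0) * v 1) + b * ((1 + v 0) * v 2) + c) ^ 2 * (v 1 * v 2)) +
     S * (∫ v in Metric.ball (0 : EuclideanSpace ℝ (Fin 3)) 1,
        (a * ((1 + v 0) * v 1) + b * ((1 + v 0) * v 2) + c) ^ 2 * (v 2) ^ 2) = C) ↔
    (10 * (3 * E + S) * a ^ 2 + 10 * (3 * S + E) * b ^ 2 + 20 * I * a * b
      + 63 * (E + S) * c ^ 2 = (945 / (4 * π)) * C) := by
  have hint {f : EuclideanSpace ℝ (Fin 3) → ℝ} (hf : Continuous f) :
      IntegrableOn f (Metric.ball 0 1) :=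
    (hf.continuousOn.integrableOn_compact (isCompact_closedBall 0 1)).mono_set
      Metric.ball_subset_closedBall
  rw [← integral_const_mul, ← integral_const_mul, ← integral_const_mul,
    ← integral_add (hint (by fun_prop)) (hint (by fun_prop)),
    ← integral_add (hint (by fun_prop)) (hint (by fun_prop)),
    setIntegral_congr_fun measurableSet_ball fun v _ => (by ring :
      _ = (a * ((1 + v 0) * v 1) + b * ((1 + v 0) * v 2) + c) ^ 2 *
        (E * v 1 ^ 2 + I * (v 1 * v 2) + S * v 2 ^ 2)),
    integral_unitBall_sq_mul_quadratic_form, ← inv_div, inv_mul_eq_iff_eq_mul₀ (by positivity),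
    eq_comm]
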